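/- Let F be a finite field and let f : X → Y be a universal homeomorphism between separated F-schemes of finite type. Then the induced map X(F) → Y(F) on F-rational points is a bijection; in particular, the finite sets X(F) and Y(F) have the same cardinality. -/

import Mathlib

/-!
A universal homeomorphism is universally injective and surjective. Universal injectivity makes
`g ↦ g ≫ f` injective on `K`-points for every field `K`, and makes every residue field
extension `κ(f x) → κ(x)` purely inseparable. Over a perfect field `K`, such as a finite one,
every embedding `κ(f x) → K` then extends uniquely to `κ(x)`, so every `K`-point of `Y` lifts
through `f`.
-/

open CategoryTheory AlgebraicGeometry CategoryTheory.Limits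

def IsUniversalHomeomorphism {X Y : Scheme} (f : X ⟶ Y) : Prop :=
  (AlgebraicGeometry.topologically @IsHomeomorph).universally f

universe u

namespace IsUniversalHomeomorphism

variable {X Y : Scheme.{u}} {f : X ⟶ Y}

lemma universallyInjective (hf : IsUniversalHomeomorphism f) : UniversallyInjective f :=
  ⟨MorphismProperty.universally_mono (fun _ _ _ h ↦ h.injective) _ hf⟩

lemma surjective (hf : IsUniversalHomeomorphism f) : Surjective f :=
  ⟨(hf _ _ _ .of_id_snd).surjective⟩

end IsUniversalHomeomorphism

namespace AlgebraicGeometry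

variable {X Y : Scheme.{u}} (f : X ⟶ Y)

section UniversallyInjective

variable [UniversallyInjective f]

lemma UniversallyInjective.injective_comp (K : Type u) [Field K] :
    Function.Injective (fun g : Spec (.of K) ⟶ X ↦ g ≫ f) := by
  have h := (tfae_universallyInjective f).out 0 1
  exact h.mp ‹_› K

lemma UniversallyInjective.isPurelyInseparable_residueFieldMap (x : X) :
    (f.residueFieldMap x).hom.IsPurelyInseparable := by
  have h := (tfae_universallyInjective f).out 0 2
  exact (h.mp ‹_›).2 x

lemma UniversallyInjective.exists_comp_eq_of_perfectField [Surjective f]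
    (K : Type u) [Field K] [PerfectField K] (b : Spec (.of K) ⟶ Y) : ∃ a, a ≫ f = b := by
  obtain ⟨⟨_, φ⟩, rfl⟩ := (Y.SpecToEquivOfField K).symm.surjective b
  obtain ⟨x, rfl⟩ := f.surjective ‹_›
  have := isPurelyInseparable_residueFieldMap f x
  algebraize [(f.residueFieldMap x).hom]
  obtain ⟨σ, hσ⟩ := (IsPurelyInseparable.bijective_comp_algebraMap (Y.residueField (f x))
    (X.residueField x) K).2 φ.hom
  refine ⟨Spec.map (CommRingCat.ofHom σ) ≫ X.fromSpecResidueField x, ?_⟩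
  rw [Category.assoc, ← f.SpecMap_residueFieldMap_fromSpecResidueField, ← Spec.map_comp_assoc,
    Scheme.SpecToEquivOfField_symm_apply]
  congr 2
  exact CommRingCat.hom_ext hσ

lemma UniversallyInjective.bijective_comp_of_perfectField [Surjective f]
    (K : Type u) [Field K] [PerfectField K] :
    Function.Bijective (fun g : Spec (.of K) ⟶ X ↦ g ≫ f) :=
  ⟨injective_comp f K, exists_comp_eq_of_perfectField f K⟩

end UniversallyInjective

end AlgebraicGeometry

/-- if `F` is a finite field and `f : X ⟶ Y` a universal homeomorphism
between separated `F`-schemes of finite type, then composition with `f` is a bijection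
from the set `X(F)` of `F`-rational points of `X` to the set `Y(F)` of `F`-rational
points of `Y`; in particular `X(F)` and `Y(F)` have the same cardinality. -/
theorem statement3 (F : Type) [Field F] [Fintype F]
    (X Y : Scheme)
    (sX : X ⟶ Spec (CommRingCat.of F)) (sY : Y ⟶ Spec (CommRingCat.of F))
    (f : X ⟶ Y) (hf : f ≫ sY = sX)
    (huniv : IsUniversalHomeomorphism f) :
    Function.Bijective
      (fun a : {a : Spec (CommRingCat.of F) ⟶ X // a ≫ sX = 𝟙 _} =>
        (⟨a.1 ≫ f, by rw [Category.assoc, hf, a.2]⟩ :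
          {b : Spec (CommRingCat.of F) ⟶ Y // b ≫ sY = 𝟙 _})) := by
  have := huniv.universallyInjective
  have := huniv.surjective
  obtain ⟨hinj, hsurj⟩ := UniversallyInjective.bijective_comp_of_perfectField f F
  refine ⟨fun a₁ a₂ h ↦ Subtype.ext (hinj congr($h.1)), fun ⟨b, hb⟩ ↦ ?_⟩
  obtain ⟨a, rfl⟩ := hsurj b
  exact ⟨⟨a, by rw [← hf, ← Category.assoc, hb]⟩, rfl⟩
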